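/- For integers 1 ≤ L < M < ∞, real 0 ≤ ε ≤ 1 − L/M, and order α ∈ (0,1) ∪ (1,∞), the maximum of Arimoto's conditional Rényi entropy H_α^A(X|Y) over all pairs (X, Y) with X valued in {1,...,M} and P_e^{(L)}(X|Y) ≤ ε equals (1/(1−α)) log( (1−ε)^α L^{1−α} + ε^α (M−L)^{1−α} ). -/

import Mathlib

/-!
Write `K(ε) = (1-ε)^α L^{1-α} + ε^α (M-L)^{1-α}`, so that the claimed maximum is
`(α/(1-α)) log K(ε)^{1/α}`. The conditional distribution `p = P_{X|Y=y}` is compared with the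
Fano-type distribution `c` which puts mass `(1-ε)/L` on a top-`L` set of `p` and `ε/(M-L)` on the
rest of `{1,…,M}`. Hölder's inequality for the pair `(p c^{α-1}, c^α)` bounds `‖p‖_α` above
(for `α < 1`) or below (for `α > 1`) by the tangent line at `s = 1-ε` of `s ↦ K(1-s)^{1/α}`,
evaluated at the top-`L` mass `s` of `p`. That line is affine, so averaging over `y` evaluates it
at `1 - P_e^{(L)} ≥ 1-ε`, and it is monotone in the right direction because
`ε/(M-L) ≤ (1-ε)/L`. At `ε = 0` the tangent degenerates, and the bound follows from `ε > 0` by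
continuity. The Fano-type distribution itself attains the bound.
-/

noncomputable section

def IsPmf {α : Type*} (p : α → ℝ) : Prop := (∀ x, 0 ≤ p x) ∧ ∑' x, p x = 1

def topSum (p : ℕ → ℝ) (k : ℕ) : ℝ :=
  sSup {t : ℝ | ∃ s : Finset ℕ, s.card = k ∧ t = ∑ x ∈ s, p x}

/-- Arimoto's conditional Rényi entropy of order `α`:
`H_α^A(X|Y) = (α/(1−α)) log E[‖P_{X|Y}‖_α]`, `‖P‖_α = (∑_x P(x)^α)^{1/α}`. -/
def arimoto (α : ℝ) {β : Type*} (q : β → ℝ) (W : β → ℕ → ℝ) : ℝ :=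
  (α / (1 - α)) * Real.log (∑' y, q y * (∑' x, W y x ^ α) ^ (1 / α))

open Finset Filter Topology Real

lemma sum_rpow_mul_rpow_le {ι : Type*} (s : Finset ι) {f g : ι → ℝ} (hf : ∀ i ∈ s, 0 ≤ f i)
    (hg : ∀ i ∈ s, 0 ≤ g i) {θ : ℝ} (h0 : 0 < θ) (h1 : θ < 1) :
    ∑ i ∈ s, f i ^ θ * g i ^ (1 - θ) ≤ (∑ i ∈ s, f i) ^ θ * (∑ i ∈ s, g i) ^ (1 - θ) := by
  have hθ : 0 < 1 - θ := by linarith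
  have hpq : HolderConjugate (1 / θ) (1 / (1 - θ)) :=
    ⟨by simp only [one_div, inv_inv]; ring, by positivity, by positivity⟩
  have holder := inner_le_Lp_mul_Lq_of_nonneg s hpq (f := fun i => f i ^ θ)
    (g := fun i => g i ^ (1 - θ)) (fun i hi => rpow_nonneg (hf i hi) _)
    (fun i hi => rpow_nonneg (hg i hi) _)
  have cancel : ∀ u t : ℝ, 0 ≤ u → t ≠ 0 → (u ^ t) ^ (1 / t) = u := fun u t hu ht => by
    rw [← rpow_mul hu, mul_one_div_cancel ht, rpow_one]
  simp only [one_div_one_div] at holder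
  rwa [sum_congr rfl fun i hi => cancel _ _ (hf i hi) h0.ne',
    sum_congr rfl fun i hi => cancel _ _ (hg i hi) hθ.ne'] at holder

section HolderWeights

variable {ι : Type*} {s : Finset ι} {f c : ι → ℝ} {α : ℝ}

lemma rpow_sum_rpow_le_of_lt_one (hα0 : 0 < α) (hα1 : α < 1) (hf : ∀ i ∈ s, 0 ≤ f i)
    (hc : ∀ i ∈ s, 0 < c i) :
    (∑ i ∈ s, f i ^ α) ^ (1 / α) ≤
      (∑ i ∈ s, c i ^ α) ^ (1 / α - 1) * ∑ i ∈ s, f i * c i ^ (α - 1) := by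
  set F := ∑ i ∈ s, f i * c i ^ (α - 1)
  set K := ∑ i ∈ s, c i ^ α
  have hF : 0 ≤ F := sum_nonneg fun i hi => mul_nonneg (hf i hi) (rpow_nonneg (hc i hi).le _)
  have hK : 0 ≤ K := sum_nonneg fun i hi => rpow_nonneg (hc i hi).le _
  have holder : ∑ i ∈ s, f i ^ α ≤ F ^ α * K ^ (1 - α) := by
    refine le_of_eq_of_le (sum_congr rfl fun i hi => ?_)
      (sum_rpow_mul_rpow_le s (fun i hi => mul_nonneg (hf i hi) (rpow_nonneg (hc i hi).le _))
        (fun i hi => rpow_nonneg (hc i hi).le _) hα0 hα1)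
    rw [mul_rpow (hf i hi) (rpow_nonneg (hc i hi).le _), ← rpow_mul (hc i hi).le,
      ← rpow_mul (hc i hi).le, mul_assoc, ← rpow_add (hc i hi),
      show (α - 1) * α + α * (1 - α) = 0 by ring, rpow_zero, mul_one]
  calc (∑ i ∈ s, f i ^ α) ^ (1 / α)
      ≤ (F ^ α * K ^ (1 - α)) ^ (1 / α) :=
        rpow_le_rpow (sum_nonneg fun i hi => rpow_nonneg (hf i hi) _) holder (by positivity)
    _ = K ^ (1 / α - 1) * F := by
        rw [mul_rpow (rpow_nonneg hF _) (rpow_nonneg hK _), ← rpow_mul hF, ← rpow_mul hK,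
          mul_one_div_cancel hα0.ne', rpow_one, mul_comm,
          show (1 - α) * (1 / α) = 1 / α - 1 by field_simp]

lemma rpow_sum_rpow_ge_of_one_lt (hα1 : 1 < α) (hf : ∀ i ∈ s, 0 ≤ f i)
    (hc : ∀ i ∈ s, 0 ≤ c i) :
    (∑ i ∈ s, c i ^ α) ^ (1 / α - 1) * ∑ i ∈ s, f i * c i ^ (α - 1) ≤
      (∑ i ∈ s, f i ^ α) ^ (1 / α) := by
  have hα0 : 0 < α := one_pos.trans hα1
  set N := (∑ i ∈ s, f i ^ α) ^ (1 / α)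
  set K := ∑ i ∈ s, c i ^ α
  have hN : 0 ≤ N := rpow_nonneg (sum_nonneg fun i hi => rpow_nonneg (hf i hi) _) _
  have holder : ∑ i ∈ s, f i * c i ^ (α - 1) ≤ N * K ^ (1 - 1 / α) := by
    refine le_of_eq_of_le (sum_congr rfl fun i hi => ?_)
      (sum_rpow_mul_rpow_le s (fun i hi => rpow_nonneg (hf i hi) _)
        (fun i hi => rpow_nonneg (hc i hi) _) (by positivity)
        ((div_lt_one hα0).2 hα1))
    rw [← rpow_mul (hf i hi), ← rpow_mul (hc i hi), mul_one_div_cancel hα0.ne', rpow_one,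
      show α * (1 - 1 / α) = α - 1 by field_simp]
  have hK : 0 ≤ K := sum_nonneg fun i hi => rpow_nonneg (hc i hi) α
  rcases hK.eq_or_lt with hK0 | hKpos
  · rw [← hK0, zero_rpow (by rw [sub_ne_zero, ne_eq, div_eq_one_iff_eq hα0.ne']; exact hα1.ne),
      zero_mul]
    exact hN
  · calc K ^ (1 / α - 1) * ∑ i ∈ s, f i * c i ^ (α - 1)
        ≤ K ^ (1 / α - 1) * (N * K ^ (1 - 1 / α)) :=
          mul_le_mul_of_nonneg_left holder (rpow_nonneg hK _)
      _ = N := by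
          rw [mul_left_comm, ← rpow_add hKpos, show 1 / α - 1 + (1 - 1 / α) = 0 by ring, rpow_zero,
            mul_one]

end HolderWeights

lemma sum_mul_ite_mem {ι : Type*} [DecidableEq ι] {S I : Finset ι} (hSI : S ⊆ I) (f : ι → ℝ)
    (g : ℝ → ℝ) (a b : ℝ) :
    ∑ x ∈ I, f x * g (if x ∈ S then a else b) =
      g a * ∑ x ∈ S, f x + g b * ∑ x ∈ I \ S, f x := by
  rw [← sum_sdiff hSI, add_comm, mul_sum, mul_sum]
  congr 1 <;> refine sum_congr rfl fun x hx => ?_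
  · rw [if_pos hx, mul_comm]
  · rw [if_neg (mem_sdiff.1 hx).2, mul_comm]

lemma card_Icc_sdiff {S : Finset ℕ} {L M : ℕ} (hSI : S ⊆ Icc 1 M) (hS : S.card = L) :
    ((Icc 1 M \ S).card : ℝ) = M - L := by
  have hLM : L ≤ M := by simpa [hS] using card_le_card hSI
  rw [card_sdiff_of_subset hSI, Nat.card_Icc, hS, Nat.add_sub_cancel, Nat.cast_sub hLM]

section PmfOn

variable {β : Type*} {p : β → ℝ}

lemma IsPmf.summable (hp : IsPmf p) : Summable p := by
  by_contra h
  simpa [tsum_eq_zero_of_not_summable h] using hp.2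

lemma IsPmf.hasSum (hp : IsPmf p) : HasSum p 1 :=
  hp.2 ▸ hp.summable.hasSum

lemma IsPmf.sum_le_one (hp : IsPmf p) (s : Finset β) : ∑ x ∈ s, p x ≤ 1 :=
  hp.2 ▸ hp.summable.sum_le_tsum s fun x _ => hp.1 x

lemma IsPmf.le_one (hp : IsPmf p) (x : β) : p x ≤ 1 := by
  simpa using hp.sum_le_one {x}

end PmfOn

section Pmf

variable {p : ℕ → ℝ} {I : Finset ℕ} {α : ℝ}

lemma IsPmf.sum_eq_one (hp : IsPmf p) (hpI : ∀ x ∉ I, p x = 0) : ∑ x ∈ I, p x = 1 :=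
  (tsum_eq_sum hpI).symm.trans hp.2

lemma IsPmf.sum_le_topSum (hp : IsPmf p) {s : Finset ℕ} {k : ℕ} (hs : s.card = k) :
    ∑ x ∈ s, p x ≤ topSum p k := by
  unfold topSum
  exact le_csSup ⟨1, by rintro _ ⟨s, -, rfl⟩; exact hp.sum_le_one s⟩ ⟨s, hs, rfl⟩

lemma IsPmf.topSum_nonneg (hp : IsPmf p) (k : ℕ) : 0 ≤ topSum p k :=
  (sum_nonneg fun x _ => hp.1 x).trans (hp.sum_le_topSum (card_range k))

lemma IsPmf.topSum_le_one (hp : IsPmf p) (k : ℕ) : topSum p k ≤ 1 := by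
  unfold topSum
  exact csSup_le ⟨∑ x ∈ range k, p x, range k, card_range k, rfl⟩
    (by rintro _ ⟨s, -, rfl⟩; exact hp.sum_le_one s)

lemma exists_sum_eq_topSum (hp0 : ∀ x, 0 ≤ p x) (hpI : ∀ x ∉ I, p x = 0) {k : ℕ}
    (hk : k ≤ I.card) : ∃ S ⊆ I, S.card = k ∧ ∑ x ∈ S, p x = topSum p k := by
  obtain ⟨S, hS, hmax⟩ := (I.powersetCard k).exists_max_image (fun s => ∑ x ∈ s, p x)
    (powersetCard_nonempty.2 hk)
  rw [mem_powersetCard] at hS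
  refine ⟨S, hS.1, hS.2, ?_⟩
  unfold topSum
  symm
  refine IsGreatest.csSup_eq ⟨⟨S, hS.2, rfl⟩, ?_⟩
  rintro _ ⟨s, hs, rfl⟩
  obtain ⟨u, hsu, huI, hu⟩ := exists_subsuperset_card_eq (inter_subset_right : s ∩ I ⊆ I)
    (hs ▸ card_le_card inter_subset_left) hk
  calc ∑ x ∈ s, p x = ∑ x ∈ s ∩ I, p x :=
        (sum_subset inter_subset_left fun x hx hxI =>
          hpI x fun h => hxI (mem_inter.2 ⟨hx, h⟩)).symm
    _ ≤ ∑ x ∈ u, p x := sum_le_sum_of_subset_of_nonneg hsu fun x _ _ => hp0 x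
    _ ≤ ∑ x ∈ S, p x := hmax u (mem_powersetCard.2 ⟨huI, hu⟩)

def rpowNorm (α : ℝ) (p : ℕ → ℝ) : ℝ := (∑' x, p x ^ α) ^ (1 / α)

lemma rpowNorm_nonneg (hp0 : ∀ x, 0 ≤ p x) : 0 ≤ rpowNorm α p :=
  rpow_nonneg (tsum_nonneg fun x => rpow_nonneg (hp0 x) _) _

lemma rpowNorm_eq_sum (hα : α ≠ 0) (hpI : ∀ x ∉ I, p x = 0) :
    rpowNorm α p = (∑ x ∈ I, p x ^ α) ^ (1 / α) := by
  rw [rpowNorm, tsum_eq_sum fun x hx => by rw [hpI x hx, zero_rpow hα]]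

lemma one_le_rpowNorm (hα0 : 0 < α) (hα1 : α ≤ 1) (hp : IsPmf p) (hpI : ∀ x ∉ I, p x = 0) :
    1 ≤ rpowNorm α p := by
  rw [rpowNorm_eq_sum hα0.ne' hpI]
  refine one_le_rpow ?_ (by positivity)
  calc 1 = ∑ x ∈ I, p x := (hp.sum_eq_one hpI).symm
    _ ≤ ∑ x ∈ I, p x ^ α := sum_le_sum fun x _ => self_le_rpow_of_le_one (hp.1 x) (hp.le_one x) hα1

lemma rpowNorm_le_one (hα1 : 1 ≤ α) (hp : IsPmf p) (hpI : ∀ x ∉ I, p x = 0) :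
    rpowNorm α p ≤ 1 := by
  have hα0 : 0 < α := one_pos.trans_le hα1
  rw [rpowNorm_eq_sum hα0.ne' hpI]
  refine rpow_le_one (sum_nonneg fun x _ => rpow_nonneg (hp.1 x) _) ?_ (by positivity)
  calc ∑ x ∈ I, p x ^ α ≤ ∑ x ∈ I, p x :=
        sum_le_sum fun x _ => rpow_le_self_of_le_one (hp.1 x) (hp.le_one x) hα1
    _ = 1 := hp.sum_eq_one hpI

end Pmf

lemma mul_div_rpow {t n : ℝ} (α : ℝ) (ht : 0 ≤ t) (hn : 0 < n) :
    n * (t / n) ^ α = t ^ α * n ^ (1 - α) := by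
  rw [div_rpow ht hn.le, rpow_sub hn, rpow_one]
  have : n ^ α ≠ 0 := (rpow_pos_of_pos hn α).ne'
  field_simp

lemma div_rpow_sub_one_mul {t n α : ℝ} (hα : α ≠ 0) (ht : 0 ≤ t) (hn : 0 < n) :
    (t / n) ^ (α - 1) * t = n * (t / n) ^ α := by
  have h := rpow_add_one' (div_nonneg ht hn.le) (y := α - 1) (by simpa using hα)
  rw [sub_add_cancel] at h
  rw [h, mul_left_comm, mul_div_cancel₀ t hn.ne']

section Fano

variable {L M : ℕ} {ε α : ℝ}

def fanoBound (L M : ℕ) (ε α : ℝ) : ℝ :=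
  (1 - ε) ^ α * (L : ℝ) ^ (1 - α) + ε ^ α * ((M : ℝ) - L) ^ (1 - α)

/-- The tangent line at `s = 1 - ε` of `s ↦ fanoBound L M (1 - s) α ^ (1 / α)`. -/
def fanoTangent (L M : ℕ) (ε α s : ℝ) : ℝ :=
  fanoBound L M ε α ^ (1 / α - 1) *
    (((1 - ε) / L) ^ (α - 1) * s + (ε / ((M : ℝ) - L)) ^ (α - 1) * (1 - s))

lemma cast_sub_cast_pos (hLM : L < M) : (0 : ℝ) < M - L :=
  sub_pos.2 (Nat.cast_lt.2 hLM)

lemma lt_one_of_le_one_sub (hL : 1 ≤ L) (hLM : L < M) (hε1 : ε ≤ 1 - (L : ℝ) / M) : ε < 1 := by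
  have : (0 : ℝ) < L / M := div_pos (by exact_mod_cast hL) (Nat.cast_pos.2 (by omega))
  linarith

lemma fano_low_le_high (hL : 1 ≤ L) (hLM : L < M) (hε1 : ε ≤ 1 - (L : ℝ) / M) :
    ε / ((M : ℝ) - L) ≤ (1 - ε) / L := by
  have hL' : (0 : ℝ) < L := by exact_mod_cast hL
  have hM : (0 : ℝ) < M := Nat.cast_pos.2 (by omega)
  have hLε : (L : ℝ) ≤ (1 - ε) * M := by rw [← div_le_iff₀ hM]; linarith
  rw [div_le_div_iff₀ (cast_sub_cast_pos hLM) hL']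
  linarith

lemma fanoBound_pos (hL : 1 ≤ L) (hLM : L < M) (hε0 : 0 ≤ ε) (hε1 : ε < 1) :
    0 < fanoBound L M ε α :=
  add_pos_of_pos_of_nonneg
    (mul_pos (rpow_pos_of_pos (by linarith) _) (rpow_pos_of_pos (by exact_mod_cast hL) _))
    (mul_nonneg (rpow_nonneg hε0 _) (rpow_nonneg (cast_sub_cast_pos hLM).le _))

lemma fanoBound_eq (hL : 1 ≤ L) (hLM : L < M) (hε0 : 0 ≤ ε) (hε1 : ε ≤ 1) :
    fanoBound L M ε α = L * ((1 - ε) / L) ^ α + ((M : ℝ) - L) * (ε / ((M : ℝ) - L)) ^ α := by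
  rw [fanoBound, mul_div_rpow α (by linarith) (by exact_mod_cast hL),
    mul_div_rpow α hε0 (cast_sub_cast_pos hLM)]

lemma fanoTangent_one_sub (hL : 1 ≤ L) (hLM : L < M) (hε0 : 0 ≤ ε) (hε1 : ε < 1)
    (hα : α ≠ 0) : fanoTangent L M ε α (1 - ε) = fanoBound L M ε α ^ (1 / α) := by
  have hK := fanoBound_pos (α := α) hL hLM hε0 hε1
  rw [fanoTangent, sub_sub_cancel, div_rpow_sub_one_mul hα (by linarith) (by exact_mod_cast hL),
    div_rpow_sub_one_mul hα hε0 (cast_sub_cast_pos hLM), ← fanoBound_eq hL hLM hε0 hε1.le,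
    ← rpow_add_one hK.ne', sub_add_cancel]

lemma fanoTangent_antitone (hL : 1 ≤ L) (hLM : L < M) (hε0 : 0 < ε)
    (hε1 : ε ≤ 1 - (L : ℝ) / M) (hα1 : α < 1) : Antitone (fanoTangent L M ε α) := by
  intro s t hst
  have hlevels : ((1 - ε) / L) ^ (α - 1) ≤ (ε / ((M : ℝ) - L)) ^ (α - 1) :=
    rpow_le_rpow_of_nonpos (div_pos hε0 (cast_sub_cast_pos hLM)) (fano_low_le_high hL hLM hε1)
      (by linarith)
  refine mul_le_mul_of_nonneg_left ?_
    (rpow_nonneg (fanoBound_pos hL hLM hε0.le (lt_one_of_le_one_sub hL hLM hε1)).le _)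
  nlinarith [mul_nonneg (sub_nonneg.2 hlevels) (sub_nonneg.2 hst)]

lemma fanoTangent_monotone (hL : 1 ≤ L) (hLM : L < M) (hε0 : 0 ≤ ε)
    (hε1 : ε ≤ 1 - (L : ℝ) / M) (hα1 : 1 < α) : Monotone (fanoTangent L M ε α) := by
  intro s t hst
  have hlevels : (ε / ((M : ℝ) - L)) ^ (α - 1) ≤ ((1 - ε) / L) ^ (α - 1) :=
    rpow_le_rpow (div_nonneg hε0 (cast_sub_cast_pos hLM).le) (fano_low_le_high hL hLM hε1)
      (by linarith)
  refine mul_le_mul_of_nonneg_left ?_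
    (rpow_nonneg (fanoBound_pos hL hLM hε0 (lt_one_of_le_one_sub hL hLM hε1)).le _)
  nlinarith [mul_nonneg (sub_nonneg.2 hlevels) (sub_nonneg.2 hst)]

lemma hasSum_mul_fanoTangent {β : Type*} {q σ : β → ℝ} {m : ℝ} (hq : HasSum q 1)
    (hσ : HasSum (fun y => q y * σ y) m) :
    HasSum (fun y => q y * fanoTangent L M ε α (σ y)) (fanoTangent L M ε α m) := by
  have h := ((hσ.mul_left (((1 - ε) / L) ^ (α - 1))).add
    ((hq.sub hσ).mul_left ((ε / ((M : ℝ) - L)) ^ (α - 1)))).mul_left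
    (fanoBound L M ε α ^ (1 / α - 1))
  exact h.congr_fun fun y => by unfold fanoTangent; ring

lemma exists_fano_weights (hL : 1 ≤ L) (hLM : L < M) (hε0 : 0 < ε) (hε1 : ε < 1)
    {p : ℕ → ℝ} (hp : IsPmf p) (hpM : ∀ x ∉ Icc 1 M, p x = 0) :
    ∃ c : ℕ → ℝ, (∀ x ∈ Icc 1 M, 0 < c x) ∧ ∑ x ∈ Icc 1 M, c x ^ α = fanoBound L M ε α ∧
      ∑ x ∈ Icc 1 M, p x * c x ^ (α - 1) =
        ((1 - ε) / L) ^ (α - 1) * topSum p L +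
          (ε / ((M : ℝ) - L)) ^ (α - 1) * (1 - topSum p L) := by
  obtain ⟨S, hSI, hS, hσ⟩ := exists_sum_eq_topSum hp.1 hpM (k := L) (by simpa using hLM.le)
  have hrest : ∑ x ∈ Icc 1 M \ S, p x = 1 - topSum p L := by
    rw [← hσ, ← hp.sum_eq_one hpM, ← sum_sdiff hSI, add_sub_cancel_right]
  have ha : 0 < (1 - ε) / L := div_pos (by linarith) (by exact_mod_cast hL)
  have hb : 0 < ε / ((M : ℝ) - L) := div_pos hε0 (cast_sub_cast_pos hLM)
  refine ⟨fun x => if x ∈ S then (1 - ε) / L else ε / ((M : ℝ) - L),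
    fun x _ => by dsimp only; split_ifs <;> assumption, ?_, ?_⟩
  · have h := sum_mul_ite_mem hSI (fun _ => 1) (· ^ α) ((1 - ε) / L) (ε / ((M : ℝ) - L))
    simp only [one_mul, sum_const, nsmul_eq_mul, mul_one, hS, card_Icc_sdiff hSI hS] at h
    rw [h, fanoBound_eq hL hLM hε0.le hε1.le, mul_comm, mul_comm (_ ^ α)]
  · rw [sum_mul_ite_mem hSI p (· ^ (α - 1)), hσ, hrest]

lemma rpowNorm_le_fanoTangent (hL : 1 ≤ L) (hLM : L < M) (hε0 : 0 < ε) (hε1 : ε < 1)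
    (hα0 : 0 < α) (hα1 : α < 1) {p : ℕ → ℝ} (hp : IsPmf p) (hpM : ∀ x ∉ Icc 1 M, p x = 0) :
    rpowNorm α p ≤ fanoTangent L M ε α (topSum p L) := by
  obtain ⟨c, hc, hcα, hpc⟩ := exists_fano_weights (α := α) hL hLM hε0 hε1 hp hpM
  rw [rpowNorm_eq_sum hα0.ne' hpM, fanoTangent, ← hcα, ← hpc]
  exact rpow_sum_rpow_le_of_lt_one hα0 hα1 (fun x _ => hp.1 x) hc

lemma fanoTangent_le_rpowNorm (hL : 1 ≤ L) (hLM : L < M) (hε0 : 0 < ε) (hε1 : ε < 1)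
    (hα1 : 1 < α) {p : ℕ → ℝ} (hp : IsPmf p) (hpM : ∀ x ∉ Icc 1 M, p x = 0) :
    fanoTangent L M ε α (topSum p L) ≤ rpowNorm α p := by
  obtain ⟨c, hc, hcα, hpc⟩ := exists_fano_weights (α := α) hL hLM hε0 hε1 hp hpM
  rw [rpowNorm_eq_sum (by linarith) hpM, fanoTangent, ← hcα, ← hpc]
  exact rpow_sum_rpow_ge_of_one_lt hα1 (fun x _ => hp.1 x) fun x hx => (hc x hx).le

lemma continuousAt_log_fanoBound (hL : 1 ≤ L) (hα0 : 0 < α) :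
    ContinuousAt (fun ε => log (fanoBound L M ε α)) 0 := by
  refine ContinuousAt.log (by unfold fanoBound; fun_prop (disch := exact hα0.le)) ?_
  have : (0 : ℝ) < (L : ℝ) ^ (1 - α) := rpow_pos_of_pos (by exact_mod_cast hL) _
  simpa [fanoBound, zero_rpow hα0.ne'] using this.ne'

end Fano

/-- `q = P_Y` and `W y = P_{X|Y=y}`; the last field says `P_e^{(L)}(X|Y) ≤ ε`. -/
structure Feasible (L M : ℕ) (ε : ℝ) {β : Type*} (q : β → ℝ) (W : β → ℕ → ℝ) : Prop where
  pmf_q : IsPmf q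
  pmf_W : ∀ y, IsPmf (W y)
  support : ∀ y x, W y x ≠ 0 → 1 ≤ x ∧ x ≤ M
  listError_le : 1 - ∑' y, q y * topSum (W y) L ≤ ε

namespace Feasible

variable {L M : ℕ} {ε α : ℝ} {β : Type*} {q : β → ℝ} {W : β → ℕ → ℝ}

lemma mono (h : Feasible L M ε q W) {ε' : ℝ} (hε : ε ≤ ε') : Feasible L M ε' q W :=
  { h with listError_le := h.listError_le.trans hε }

lemma eq_zero_of_notMem (h : Feasible L M ε q W) (y : β) : ∀ x ∉ Icc 1 M, W y x = 0 :=
  fun x hx => by_contra fun hW => hx (mem_Icc.2 (h.support y x hW))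

lemma summable_topSum (h : Feasible L M ε q W) :
    Summable fun y => q y * topSum (W y) L :=
  h.pmf_q.summable.of_nonneg_of_le
    (fun y => mul_nonneg (h.pmf_q.1 y) ((h.pmf_W y).topSum_nonneg L))
    (fun y => mul_le_of_le_one_right (h.pmf_q.1 y) ((h.pmf_W y).topSum_le_one L))

lemma tsum_rpowNorm_mem_Icc_of_lt_one (h : Feasible L M ε q W) (hL : 1 ≤ L) (hLM : L < M)
    (hε0 : 0 < ε) (hε1 : ε ≤ 1 - (L : ℝ) / M) (hα0 : 0 < α) (hα1 : α < 1) :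
    ∑' y, q y * rpowNorm α (W y) ∈ Set.Icc 1 (fanoBound L M ε α ^ (1 / α)) := by
  have hε1' := lt_one_of_le_one_sub hL hLM hε1
  have hT := hasSum_mul_fanoTangent (L := L) (M := M) (ε := ε) (α := α) h.pmf_q.hasSum
    h.summable_topSum.hasSum
  have hle : ∀ y, q y * rpowNorm α (W y) ≤ q y * fanoTangent L M ε α (topSum (W y) L) :=
    fun y => mul_le_mul_of_nonneg_left (rpowNorm_le_fanoTangent hL hLM hε0 hε1' hα0 hα1
      (h.pmf_W y) (h.eq_zero_of_notMem y)) (h.pmf_q.1 y)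
  have hN : Summable fun y => q y * rpowNorm α (W y) :=
    hT.summable.of_nonneg_of_le
      (fun y => mul_nonneg (h.pmf_q.1 y) (rpowNorm_nonneg (h.pmf_W y).1)) hle
  constructor
  · calc 1 = ∑' y, q y := h.pmf_q.2.symm
      _ ≤ _ := h.pmf_q.summable.tsum_le_tsum (fun y => le_mul_of_one_le_right (h.pmf_q.1 y)
          (one_le_rpowNorm hα0 hα1.le (h.pmf_W y) (h.eq_zero_of_notMem y))) hN
  · calc ∑' y, q y * rpowNorm α (W y)
        ≤ fanoTangent L M ε α (∑' y, q y * topSum (W y) L) := hasSum_le hle hN.hasSum hT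
      _ ≤ fanoTangent L M ε α (1 - ε) :=
          fanoTangent_antitone hL hLM hε0 hε1 hα1 (by linarith [h.listError_le])
      _ = _ := fanoTangent_one_sub hL hLM hε0.le hε1' hα0.ne'

lemma rpow_le_tsum_rpowNorm_of_one_lt (h : Feasible L M ε q W) (hL : 1 ≤ L) (hLM : L < M)
    (hε0 : 0 < ε) (hε1 : ε ≤ 1 - (L : ℝ) / M) (hα1 : 1 < α) :
    fanoBound L M ε α ^ (1 / α) ≤ ∑' y, q y * rpowNorm α (W y) := by
  have hε1' := lt_one_of_le_one_sub hL hLM hε1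
  have hT := hasSum_mul_fanoTangent (L := L) (M := M) (ε := ε) (α := α) h.pmf_q.hasSum
    h.summable_topSum.hasSum
  have hle : ∀ y, q y * fanoTangent L M ε α (topSum (W y) L) ≤ q y * rpowNorm α (W y) :=
    fun y => mul_le_mul_of_nonneg_left (fanoTangent_le_rpowNorm hL hLM hε0 hε1' hα1
      (h.pmf_W y) (h.eq_zero_of_notMem y)) (h.pmf_q.1 y)
  have hN : Summable fun y => q y * rpowNorm α (W y) :=
    h.pmf_q.summable.of_nonneg_of_le
      (fun y => mul_nonneg (h.pmf_q.1 y) (rpowNorm_nonneg (h.pmf_W y).1))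
      (fun y => mul_le_of_le_one_right (h.pmf_q.1 y)
        (rpowNorm_le_one hα1.le (h.pmf_W y) (h.eq_zero_of_notMem y)))
  calc fanoBound L M ε α ^ (1 / α) = fanoTangent L M ε α (1 - ε) :=
        (fanoTangent_one_sub hL hLM hε0.le hε1' (by linarith)).symm
    _ ≤ fanoTangent L M ε α (∑' y, q y * topSum (W y) L) :=
        fanoTangent_monotone hL hLM hε0.le hε1 hα1 (by linarith [h.listError_le])
    _ ≤ _ := hasSum_le hle hT hN.hasSum

lemma arimoto_le_of_pos (h : Feasible L M ε q W) (hL : 1 ≤ L) (hLM : L < M) (hε0 : 0 < ε)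
    (hε1 : ε ≤ 1 - (L : ℝ) / M) (hα0 : 0 < α) (hα1 : α ≠ 1) :
    arimoto α q W ≤ 1 / (1 - α) * log (fanoBound L M ε α) := by
  have hK := fanoBound_pos (α := α) hL hLM hε0.le (lt_one_of_le_one_sub hL hLM hε1)
  have h1α : 1 - α ≠ 0 := sub_ne_zero.2 hα1.symm
  rw [show 1 / (1 - α) * log (fanoBound L M ε α) =
      α / (1 - α) * log (fanoBound L M ε α ^ (1 / α)) by
    rw [log_rpow hK]; field_simp]
  change α / (1 - α) * log (∑' y, q y * rpowNorm α (W y)) ≤ _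
  rcases hα1.lt_or_gt with hα1 | hα1
  · obtain ⟨hpos, hle⟩ := h.tsum_rpowNorm_mem_Icc_of_lt_one hL hLM hε0 hε1 hα0 hα1
    exact mul_le_mul_of_nonneg_left (log_le_log (by linarith) hle)
      (div_nonneg hα0.le (by linarith))
  · exact mul_le_mul_of_nonpos_left
      (log_le_log (rpow_pos_of_pos hK _) (h.rpow_le_tsum_rpowNorm_of_one_lt hL hLM hε0 hε1 hα1))
      (div_nonpos_of_nonneg_of_nonpos hα0.le (by linarith))

lemma arimoto_le (h : Feasible L M ε q W) (hL : 1 ≤ L) (hLM : L < M) (hε0 : 0 ≤ ε)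
    (hε1 : ε ≤ 1 - (L : ℝ) / M) (hα0 : 0 < α) (hα1 : α ≠ 1) :
    arimoto α q W ≤ 1 / (1 - α) * log (fanoBound L M ε α) := by
  rcases hε0.eq_or_lt with rfl | hε0
  · have hδ : (0 : ℝ) < 1 - L / M := by
      rw [sub_pos, div_lt_one (Nat.cast_pos.2 (by omega))]
      exact_mod_cast hLM
    refine ge_of_tendsto (((continuousAt_log_fanoBound hL hα0).const_mul _).tendsto.mono_left
      (nhdsWithin_le_nhds (s := Set.Ioi 0))) ?_
    filter_upwards [Ioc_mem_nhdsGT hδ] with ε' hε'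
    exact (h.mono hε'.1.le).arimoto_le_of_pos hL hLM hε'.1 hε'.2 hα0 hα1
  · exact h.arimoto_le_of_pos hL hLM hε0 hε1 hα0 hα1

end Feasible

section Achievability

variable {L M : ℕ} {ε α : ℝ}

def fanoDist (L M : ℕ) (ε : ℝ) (x : ℕ) : ℝ :=
  if x ∈ Icc 1 M then (if x ∈ Icc 1 L then (1 - ε) / L else ε / ((M : ℝ) - L)) else 0

lemma fanoDist_eq_zero {x : ℕ} (hx : x ∉ Icc 1 M) : fanoDist L M ε x = 0 := if_neg hx

lemma tsum_comp_fanoDist (hLM : L ≤ M) {g : ℝ → ℝ} (hg : g 0 = 0) :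
    ∑' x, g (fanoDist L M ε x) = L * g ((1 - ε) / L) + ((M : ℝ) - L) * g (ε / ((M : ℝ) - L)) := by
  have hSI : Icc 1 L ⊆ Icc 1 M := Icc_subset_Icc_right hLM
  have hT := card_Icc_sdiff hSI (L := L) (by simp)
  rw [tsum_eq_sum (s := Icc 1 M) fun x hx => by rw [fanoDist_eq_zero hx, hg]]
  calc ∑ x ∈ Icc 1 M, g (fanoDist L M ε x)
      = ∑ x ∈ Icc 1 M, 1 * g (if x ∈ Icc 1 L then (1 - ε) / L else ε / ((M : ℝ) - L)) :=
        sum_congr rfl fun x hx => by rw [fanoDist, if_pos hx, one_mul]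
    _ = _ := by
        rw [sum_mul_ite_mem hSI]
        simp only [sum_const, nsmul_eq_mul, mul_one, Nat.card_Icc, Nat.add_sub_cancel, hT]
        ring

lemma isPmf_fanoDist (hL : 1 ≤ L) (hLM : L < M) (hε0 : 0 ≤ ε) (hε1 : ε ≤ 1) :
    IsPmf (fanoDist L M ε) := by
  have hL' : (0 : ℝ) < L := by exact_mod_cast hL
  have hML := cast_sub_cast_pos hLM
  refine ⟨fun x => ?_, ?_⟩
  · unfold fanoDist
    split_ifs
    exacts [div_nonneg (by linarith) hL'.le, div_nonneg hε0 hML.le, le_rfl]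
  · have h := tsum_comp_fanoDist (L := L) (M := M) (ε := ε) hLM.le (g := id) rfl
    simp only [id] at h
    rw [h]
    field_simp
    ring

lemma one_sub_le_topSum_fanoDist (hL : 1 ≤ L) (hLM : L < M) (hε0 : 0 ≤ ε) (hε1 : ε ≤ 1) :
    1 - ε ≤ topSum (fanoDist L M ε) L := by
  refine le_of_eq_of_le ?_ ((isPmf_fanoDist hL hLM hε0 hε1).sum_le_topSum (s := Icc 1 L)
    (by simp))
  rw [sum_congr rfl fun x hx => by
      rw [fanoDist, if_pos (Icc_subset_Icc_right hLM.le hx), if_pos hx],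
    sum_const, Nat.card_Icc, Nat.add_sub_cancel, nsmul_eq_mul,
    mul_div_cancel₀ _ (by exact_mod_cast (one_pos.trans_le hL).ne')]

lemma exists_feasible_arimoto_eq (hL : 1 ≤ L) (hLM : L < M) (hε0 : 0 ≤ ε)
    (hε1 : ε ≤ 1 - (L : ℝ) / M) (hα0 : 0 < α) (hα1 : α ≠ 1) :
    ∃ (β : Type) (q : β → ℝ) (W : β → ℕ → ℝ), Feasible L M ε q W ∧
      arimoto α q W = 1 / (1 - α) * log (fanoBound L M ε α) := by
  have hε1' := lt_one_of_le_one_sub hL hLM hε1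
  have hpmf := isPmf_fanoDist hL hLM hε0 hε1'.le
  refine ⟨Unit, fun _ => 1, fun _ => fanoDist L M ε,
    ⟨⟨fun _ => zero_le_one, by simp⟩, fun _ => hpmf,
      fun _ x hx => mem_Icc.1 (not_not.1 fun h => hx (fanoDist_eq_zero h)), ?_⟩, ?_⟩
  · simp only [tsum_const, Nat.card_unique, one_smul, one_mul]
    linarith [one_sub_le_topSum_fanoDist hL hLM hε0 hε1'.le]
  · have hnorm : rpowNorm α (fanoDist L M ε) = fanoBound L M ε α ^ (1 / α) := by
      rw [rpowNorm, tsum_comp_fanoDist hLM.le (g := (· ^ α)) (zero_rpow hα0.ne'),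
        fanoBound_eq hL hLM hε0 hε1'.le]
    have h1α : 1 - α ≠ 0 := sub_ne_zero.2 hα1.symm
    change α / (1 - α) * log (∑' _ : Unit, 1 * rpowNorm α (fanoDist L M ε)) = _
    rw [tsum_const, Nat.card_unique, one_smul, one_mul, hnorm,
      log_rpow (fanoBound_pos hL hLM hε0 hε1')]
    field_simp

end Achievability

/-- Fano's inequality with list decoding for Arimoto's conditional Rényi
entropy of order `α ∈ (0,1) ∪ (1,∞)`: the maximum of `H_α^A(X|Y)` over pairs
`(X,Y)` with `X` valued in `{1,…,M}` and `P_e^{(L)}(X|Y) ≤ ε` equals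
`(1/(1−α)) log((1−ε)^α L^{1−α} + ε^α (M−L)^{1−α})`. -/
theorem stmt_9 (L M : ℕ) (ε α : ℝ) (hL : 1 ≤ L) (hLM : L < M)
    (hε0 : 0 ≤ ε) (hε1 : ε ≤ 1 - (L : ℝ) / M) (hα0 : 0 < α) (hα1 : α ≠ 1) :
    (∀ (β : Type) (q : β → ℝ) (W : β → ℕ → ℝ), IsPmf q → (∀ y, IsPmf (W y)) →
      (∀ y x, W y x ≠ 0 → 1 ≤ x ∧ x ≤ M) →
      1 - ∑' y, q y * topSum (W y) L ≤ ε →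
      arimoto α q W ≤
        (1 / (1 - α)) * Real.log
          ((1 - ε) ^ α * (L : ℝ) ^ (1 - α) + ε ^ α * ((M : ℝ) - L) ^ (1 - α))) ∧
    (∃ (β : Type) (q : β → ℝ) (W : β → ℕ → ℝ), IsPmf q ∧ (∀ y, IsPmf (W y)) ∧
      (∀ y x, W y x ≠ 0 → 1 ≤ x ∧ x ≤ M) ∧
      1 - ∑' y, q y * topSum (W y) L ≤ ε ∧
      arimoto α q W =
        (1 / (1 - α)) * Real.log
          ((1 - ε) ^ α * (L : ℝ) ^ (1 - α) + ε ^ α * ((M : ℝ) - L) ^ (1 - α))) := by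
  refine ⟨fun β q W hq hW hsupp herr =>
    (Feasible.mk hq hW hsupp herr).arimoto_le hL hLM hε0 hε1 hα0 hα1, ?_⟩
  obtain ⟨β, q, W, ⟨hq, hW, hsupp, herr⟩, heq⟩ :=
    exists_feasible_arimoto_eq hL hLM hε0 hε1 hα0 hα1
  exact ⟨β, q, W, hq, hW, hsupp, herr, heq⟩
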